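/- arXiv:2204.07327 — 6 statements merged into one kernel-verified Lean document; each statement's English description precedes it below -/
import Mathlib

section
/- If x = T[i..i+ℓ-1] and y = T[j..j+ℓ-1] are two palindromic substrings of equal length ℓ of a string T with i < j, and they overlap (i.e., j ≤ i+ℓ-1), then the substring z = T[i..j+ℓ-1] has period 2(j-i). -/
/-- The substring T[i..j] of T (1-indexed, inclusive). -/
def sub (T : List Char) (i j : ℕ) : List Char := (T.drop (i-1)).take (j+1-i)

/-- A string is a palindrome if it equals its reversal. -/
def IsPal (w : List Char) : Prop := w.reverse = w

/-- p is a period of w: 0 < p ≤ |w| and w[k] = w[k+p] for all valid k (0-indexed). -/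
def HasPeriod (w : List Char) (p : ℕ) : Prop :=
  0 < p ∧ p ≤ w.length ∧ ∀ k, k + p < w.length → w[k]? = w[k + p]?

/-- u occurs in T at (1-indexed) position i. -/
def OccursAt (u T : List Char) (i : ℕ) : Prop :=
  1 ≤ i ∧ i + u.length - 1 ≤ T.length ∧ sub T i (i + u.length - 1) = u

/-- u is unique in T: nonempty and occurs at exactly one position. -/
def UniqueIn (u T : List Char) : Prop := u ≠ [] ∧ ∃! i, OccursAt u T i

/-- u occurs at least twice in T. -/
def OccursTwice (u T : List Char) : Prop := ∃ i j, i ≠ j ∧ OccursAt u T i ∧ OccursAt u T j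

/-- T[i..j] is a (nonempty, in-bounds) palindromic substring of T. -/
def IsPalSub (T : List Char) (i j : ℕ) : Prop :=
  1 ≤ i ∧ i ≤ j ∧ j ≤ T.length ∧ IsPal (sub T i j)

/-- T[i..j] is a shortest unique palindromic substring of T for the interval [p,q]. -/
def IsSUPS (T : List Char) (p q i j : ℕ) : Prop :=
  IsPalSub T i j ∧ UniqueIn (sub T i j) T ∧ i ≤ p ∧ q ≤ j ∧
  ∀ i' j', IsPalSub T i' j' → UniqueIn (sub T i' j') T → i' ≤ p → q ≤ j' →
    j + 1 - i ≤ j' + 1 - i'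

/-- T[i..j] is a minimal unique palindromic substring of T. -/
def IsMUPS (T : List Char) (i j : ℕ) : Prop :=
  IsPalSub T i j ∧ UniqueIn (sub T i j) T ∧ ¬ UniqueIn (sub T (i+1) (j-1)) T

lemma pal_get? {w : List Char} (hw : IsPal w) {k : ℕ} (hk : k < w.length) :
    w[k]? = w[w.length - 1 - k]? := by
  conv_lhs => rw [← hw]
  exact List.getElem?_reverse hk

/-- Overlapping equal-length palindromes induce a period 2(j-i) on their union. -/
theorem overlap_palindromes_period (T : List Char) (i j ℓ : ℕ)
    (hi : 1 ≤ i) (hij : i < j) (hover : j ≤ i + ℓ - 1) (hℓ : 1 ≤ ℓ)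
    (hbound : j + ℓ - 1 ≤ T.length)
    (hx : IsPal (sub T i (i + ℓ - 1)))
    (hy : IsPal (sub T j (j + ℓ - 1))) :
    HasPeriod (sub T i (j + ℓ - 1)) (2 * (j - i)) := by
  set d := j - i with hd
  have hj : j = i + d := by omega
  have hd1 : 1 ≤ d := by omega
  have hdl : d < ℓ := by omega
  set S := T.drop (i-1) with hS
  have hSlen : S.length = T.length - (i-1) := List.length_drop
  have hSl : ℓ + d ≤ S.length := by omega
  clear_value S
  -- rewrite the three substrings
  have hxe : sub T i (i + ℓ - 1) = S.take ℓ := by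
    simp only [sub]
    rw [← hS]
    congr 1
    omega
  have hye : sub T j (j + ℓ - 1) = (S.drop d).take ℓ := by
    have h1 : (i-1)+d = j-1 := by omega
    have h2 : j+ℓ-1+1-j = ℓ := by omega
    simp only [sub, hS, List.drop_drop, h1, h2]
  have hze : sub T i (j + ℓ - 1) = S.take (ℓ + d) := by
    simp only [sub]
    rw [← hS]
    congr 1
    omega
  rw [hxe] at hx
  rw [hye] at hy
  rw [hze]
  have hxlen : (S.take ℓ).length = ℓ := by rw [List.length_take]; omega
  have hylen : ((S.drop d).take ℓ).length = ℓ := by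
    rw [List.length_take, List.length_drop]; omega
  have hkey1 : ∀ k, k < ℓ → S[k]? = S[ℓ - 1 - k]? := by
    intro k hk
    have h1 := pal_get? hx (k := k) (by omega)
    rw [hxlen] at h1
    rwa [List.getElem?_take_of_lt hk, List.getElem?_take_of_lt (show ℓ - 1 - k < ℓ by omega)] at h1
  have hkey2 : ∀ k, k < ℓ → S[d + k]? = S[d + (ℓ - 1 - k)]? := by
    intro k hk
    have h1 := pal_get? hy (k := k) (by omega)
    rw [hylen] at h1
    rwa [List.getElem?_take_of_lt hk, List.getElem?_take_of_lt (show ℓ - 1 - k < ℓ by omega),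
      List.getElem?_drop, List.getElem?_drop] at h1
  refine ⟨by omega, ?_, ?_⟩
  · rw [List.length_take]; omega
  · intro k hk
    rw [List.length_take] at hk
    have hkl : k + d < ℓ := by omega
    rw [List.getElem?_take_of_lt (show k < ℓ + d by omega),
      List.getElem?_take_of_lt (show k + 2*d < ℓ + d by omega)]
    have e1 : S[k]? = S[ℓ - 1 - k]? := hkey1 k (by omega)
    have e2 : S[d + (k + d)]? = S[d + (ℓ - 1 - (k + d))]? := hkey2 (k + d) hkl
    have e3 : d + (ℓ - 1 - (k + d)) = ℓ - 1 - k := by omega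
    have e4 : k + 2 * d = d + (k + d) := by omega
    rw [e4, e2, e3, e1]
end

section
/- If a string w has periods p and q with p + q ≤ |w|, then w has period gcd(p, q). -/
lemma period_sub (w : List Char) (p q : ℕ)
    (hp : HasPeriod w p) (hq : HasPeriod w q) (hlt : p < q) (hpq : p + q ≤ w.length) :
    HasPeriod w (q - p) := by
  obtain ⟨hp0, hpl, hpk⟩ := hp
  obtain ⟨hq0, hql, hqk⟩ := hq
  refine ⟨by omega, by omega, fun k hk => ?_⟩
  by_cases hcase : k + q < w.length
  · have h1 := hqk k hcase
    have h2 := hpk (k + (q - p)) (by omega)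
    rw [show k + (q - p) + p = k + q by omega] at h2
    rw [h1, h2]
  · have hkp : p ≤ k := by omega
    obtain ⟨m, rfl⟩ : ∃ m, k = m + p := ⟨k - p, by omega⟩
    have h1 := hpk m (by omega)
    have h2 := hqk m (by omega)
    rw [← h1, h2, show m + q = m + p + (q - p) by omega]

lemma fine_wilf_aux : ∀ n (w : List Char) (p q : ℕ), p + q ≤ n →
    HasPeriod w p → HasPeriod w q → p + q ≤ w.length → HasPeriod w (Nat.gcd p q) := by
  intro n
  induction n with
  | zero => intro w p q h hp _ _; exact absurd h (by have := hp.1; omega)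
  | succ n ih =>
    intro w p q h hp hq hpq
    rcases lt_trichotomy p q with hlt | heq | hgt
    · rw [← Nat.gcd_sub_self_right (le_of_lt hlt)]
      exact ih w p (q - p) (by have := hp.1; omega) hp
        (period_sub w p q hp hq hlt hpq) (by have := hq.2.1; omega)
    · subst heq; rwa [Nat.gcd_self]
    · rw [Nat.gcd_comm, ← Nat.gcd_sub_self_right (le_of_lt hgt)]
      exact ih w q (p - q) (by have := hq.1; omega) hq
        (period_sub w q p hq hp hgt (by omega)) (by have := hp.2.1; omega)

/-- Fine–Wilf periodicity lemma (weak form). -/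
theorem fine_wilf (w : List Char) (p q : ℕ)
    (hp : HasPeriod w p) (hq : HasPeriod w q) (hpq : p + q ≤ w.length) :
    HasPeriod w (Nat.gcd p q) :=
  fine_wilf_aux (p + q) w p q le_rfl hp hq hpq
end

section
/- Let T be a string and p a position in T. There are at most two distinct palindromic substrings x = T[i..i+ℓ-1] of a fixed length ℓ such that x is unique in T (occurs exactly once in T), the occurrence interval [i, i+ℓ-1] contains p, and the center (2i+ℓ-1)/2 of x is at most p. -/
/-- The condition: T[i..i+ℓ-1] is a unique palindromic substring of T
whose occurrence contains p and whose center (2i+ℓ-1)/2 is at most p. -/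
def Cond (T : List Char) (p ℓ i : ℕ) : Prop :=
  IsPalSub T i (i + ℓ - 1) ∧ UniqueIn (sub T i (i + ℓ - 1)) T ∧
  i ≤ p ∧ p ≤ i + ℓ - 1 ∧ 2 * i + ℓ - 1 ≤ 2 * p


section AtMostTwoAux

private lemma per_mul' (f : ℕ → Option Char) (q n : ℕ)
    (hper : ∀ k, k + q < n → f k = f (k + q)) :
    ∀ t k, k + q * t < n → f k = f (k + q * t) := by
  intro t
  induction t with
  | zero => intro k _; simp
  | succ t ih =>
    intro k hk
    have he : q * (t + 1) = q * t + q := by ring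
    have h1 : f k = f (k + q * t) := ih k (by omega)
    have h2 : f (k + q * t) = f (k + q * t + q) := hper _ (by omega)
    rw [h1, h2]; congr 1; omega

/-- A weak Fine–Wilf theorem: two periods `p`, `q` on a window of length `≥ p + q`
force values to agree on residue classes mod `gcd p q`. -/
private lemma fineWilf : ∀ N p q n (f : ℕ → Option Char), p + q ≤ N → 0 < p → 0 < q →
    p + q ≤ n →
    (∀ k, k + p < n → f k = f (k + p)) → (∀ k, k + q < n → f k = f (k + q)) →
    ∀ k m, k < n → m < n → k % Nat.gcd p q = m % Nat.gcd p q → f k = f m := by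
  intro N
  induction N with
  | zero => intro p q n f hN hp; omega
  | succ N ih =>
    intro p q n f hN hp hq hn hfp hfq k m hk hm hres
    rcases lt_trichotomy p q with hlt | heq | hgt
    · -- p < q : replace q by q - p on the window [0, n - p)
      have hg : Nat.gcd p (q - p) = Nat.gcd p q := by
        conv_rhs => rw [← Nat.sub_add_cancel hlt.le, Nat.gcd_add_self_right]
      have hper : ∀ k, k + (q - p) < n - p → f k = f (k + (q - p)) := by
        intro k hk
        have h1 : f k = f (k + q) := hfq k (by omega)
        have h2 : f (k + (q - p)) = f (k + (q - p) + p) := hfp _ (by omega)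
        rw [h1, h2]; congr 1; omega
      have hfp' : ∀ k, k + p < n - p → f k = f (k + p) := fun k hk => hfp k (by omega)
      have key := ih p (q - p) (n - p) f (by omega) hp (by omega) (by omega) hfp' hper
      have hnorm : ∀ x, x < n → ∃ x', x' < n - p ∧ f x = f x' ∧
          x % Nat.gcd p q = x' % Nat.gcd p q := by
        intro x hx
        by_cases hxc : x < n - p
        · exact ⟨x, hxc, rfl, rfl⟩
        · refine ⟨x - p, by omega, ?_, ?_⟩
          · have h := hfp (x - p) (by omega)
            rw [h]; congr 1; omega
          · obtain ⟨c, hc⟩ := Nat.gcd_dvd_left p q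
            have hx' : x = (x - p) + Nat.gcd p q * c := by omega
            conv_lhs => rw [hx', Nat.add_mul_mod_self_left]
      obtain ⟨k', hk', hfk, hrk⟩ := hnorm k hk
      obtain ⟨m', hm', hfm, hrm⟩ := hnorm m hm
      rw [hfk, hfm]
      exact key k' m' hk' hm' (by rw [hg, ← hrk, ← hrm]; exact hres)
    · -- p = q
      subst heq
      rw [Nat.gcd_self] at hres
      rcases le_total k m with hkm | hmk
      · obtain ⟨t, ht⟩ := (Nat.modEq_iff_dvd' hkm).mp hres
        have hm' : m = k + p * t := by omega
        rw [hm']; exact per_mul' f p n hfp t k (by omega)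
      · obtain ⟨t, ht⟩ := (Nat.modEq_iff_dvd' hmk).mp hres.symm
        have hk' : k = m + p * t := by omega
        rw [hk']; exact (per_mul' f p n hfp t m (by omega)).symm
    · -- q < p : symmetric to the first case
      have hg : Nat.gcd q (p - q) = Nat.gcd p q := by
        rw [Nat.gcd_comm p q]
        conv_rhs => rw [← Nat.sub_add_cancel hgt.le, Nat.gcd_add_self_right]
      have hper : ∀ k, k + (p - q) < n - q → f k = f (k + (p - q)) := by
        intro k hk
        have h1 : f k = f (k + p) := hfp k (by omega)
        have h2 : f (k + (p - q)) = f (k + (p - q) + q) := hfq _ (by omega)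
        rw [h1, h2]; congr 1; omega
      have hfq' : ∀ k, k + q < n - q → f k = f (k + q) := fun k hk => hfq k (by omega)
      have key := ih q (p - q) (n - q) f (by omega) hq (by omega) (by omega) hfq' hper
      have hnorm : ∀ x, x < n → ∃ x', x' < n - q ∧ f x = f x' ∧
          x % Nat.gcd p q = x' % Nat.gcd p q := by
        intro x hx
        by_cases hxc : x < n - q
        · exact ⟨x, hxc, rfl, rfl⟩
        · refine ⟨x - q, by omega, ?_, ?_⟩
          · have h := hfq (x - q) (by omega)
            rw [h]; congr 1; omega
          · obtain ⟨c, hc⟩ := Nat.gcd_dvd_right p q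
            have hx' : x = (x - q) + Nat.gcd p q * c := by omega
            conv_lhs => rw [hx', Nat.add_mul_mod_self_left]
      obtain ⟨k', hk', hfk, hrk⟩ := hnorm k hk
      obtain ⟨m', hm', hfm, hrm⟩ := hnorm m hm
      rw [hfk, hfm]
      exact key k' m' hk' hm' (by rw [hg, ← hrk, ← hrm]; exact hres)

private lemma sub_eq_take' (T : List Char) (i ℓ : ℕ) (hℓ : 1 ≤ ℓ) :
    sub T i (i + ℓ - 1) = (T.drop (i - 1)).take ℓ := by
  unfold sub; congr 1; omega

private lemma sub_getElem?' (T : List Char) (i ℓ t : ℕ) (hℓ : 1 ≤ ℓ) :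
    (sub T i (i + ℓ - 1))[t]? = if t < ℓ then T[i - 1 + t]? else none := by
  rw [sub_eq_take' T i ℓ hℓ, List.getElem?_take]
  by_cases h : t < ℓ
  · simp [h, List.getElem?_drop]
  · simp [h]

private lemma sub_length' (T : List Char) (i ℓ : ℕ) (hℓ : 1 ≤ ℓ) (h1 : 1 ≤ i)
    (hle : i + ℓ - 1 ≤ T.length) : (sub T i (i + ℓ - 1)).length = ℓ := by
  rw [sub_eq_take' T i ℓ hℓ, List.length_take, List.length_drop]; omega

private lemma pal_get' (T : List Char) (i ℓ : ℕ) (h1 : 1 ≤ i) (hℓ : 1 ≤ ℓ)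
    (hle : i + ℓ - 1 ≤ T.length) (hpal : IsPal (sub T i (i + ℓ - 1))) :
    ∀ s t, s + t = ℓ - 1 → T[i - 1 + s]? = T[i - 1 + t]? := by
  intro s t hst
  have hs : s < ℓ := by omega
  have ht : t < ℓ := by omega
  have hlen := sub_length' T i ℓ hℓ h1 hle
  have h1s : (sub T i (i + ℓ - 1))[s]? = T[i - 1 + s]? := by
    rw [sub_getElem?' T i ℓ s hℓ]; simp [hs]
  have h1t : (sub T i (i + ℓ - 1))[t]? = T[i - 1 + t]? := by
    rw [sub_getElem?' T i ℓ t hℓ]; simp [ht]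
  have hrev : (sub T i (i + ℓ - 1)).reverse[s]? =
      (sub T i (i + ℓ - 1))[(sub T i (i + ℓ - 1)).length - 1 - s]? :=
    List.getElem?_reverse (by omega)
  rw [hpal] at hrev
  have he : (sub T i (i + ℓ - 1)).length - 1 - s = t := by omega
  rw [he] at hrev
  rw [← h1s, ← h1t, hrev]

/-- Two palindromes of the same length `ℓ` at 0-indexed positions `a ≤ b`
give period `2*(b-a)` on the union of their occurrences. -/
private lemma pair_period' (T : List Char) (ℓ a b : ℕ) (hℓ : 1 ≤ ℓ)
    (hpa : ∀ s t, s + t = ℓ - 1 → T[a + s]? = T[a + t]?)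
    (hpb : ∀ s t, s + t = ℓ - 1 → T[b + s]? = T[b + t]?)
    (hab : a ≤ b) :
    ∀ k, a ≤ k → k + 2 * (b - a) ≤ b + ℓ - 1 → T[k]? = T[k + 2 * (b - a)]? := by
  intro k hak hk
  have e1 := hpa (k - a) (ℓ - 1 - (k - a)) (by omega)
  have e2 := hpb (a + (ℓ - 1 - (k - a)) - b) ((k - a) + (b - a)) (by omega)
  have ha1 : a + (k - a) = k := by omega
  have hb1 : b + (a + (ℓ - 1 - (k - a)) - b) = a + (ℓ - 1 - (k - a)) := by omega
  have hb2 : b + ((k - a) + (b - a)) = k + 2 * (b - a) := by omega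
  rw [ha1] at e1
  rw [hb1, hb2] at e2
  exact e1.trans e2

private lemma key_lemma (T : List Char) (p ℓ : ℕ) (hℓ : 1 ≤ ℓ) (a b c : ℕ)
    (hab : a < b) (hbc : b < c)
    (ha : Cond T p ℓ a) (hb : Cond T p ℓ b) (hc : Cond T p ℓ c) : False := by
  obtain ⟨⟨ha1, ha2, ha3, ha4⟩, hua, hap, hpa, hca⟩ := ha
  obtain ⟨⟨hb1, hb2, hb3, hb4⟩, hub, hbp, hpb, hcb⟩ := hb
  obtain ⟨⟨hc1, hc2, hc3, hc4⟩, huc, hcp, hpc, hcc⟩ := hc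
  set d2 := b - a with hd2
  set e := c - b with hde
  -- shortness: 2*(c-a) ≤ ℓ - 1
  have hsize : 2 * (d2 + e) ≤ ℓ - 1 := by omega
  have Pa := pal_get' T a ℓ ha1 hℓ ha3 ha4
  have Pb := pal_get' T b ℓ hb1 hℓ hb3 hb4
  have Pc := pal_get' T c ℓ hc1 hℓ hc3 hc4
  have P2 := pair_period' T ℓ (a - 1) (b - 1) hℓ Pa Pb (by omega)
  have P3 := pair_period' T ℓ (b - 1) (c - 1) hℓ Pb Pc (by omega)
  have hd2' : b - 1 - (a - 1) = d2 := by omega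
  have hde' : c - 1 - (b - 1) = e := by omega
  simp only [hd2'] at P2
  simp only [hde'] at P3
  set g := Nat.gcd (2 * d2) (2 * e) with hg
  obtain ⟨c2, hc2'⟩ : g ∣ 2 * d2 := Nat.gcd_dvd_left _ _
  obtain ⟨c3, hc3'⟩ : g ∣ 2 * e := Nat.gcd_dvd_right _ _
  have hgd2 : g ≤ 2 * d2 := Nat.le_of_dvd (by omega) ⟨c2, hc2'⟩
  have hge : g ≤ 2 * e := Nat.le_of_dvd (by omega) ⟨c3, hc3'⟩
  have hg2 : 2 ∣ g := Nat.dvd_gcd ⟨d2, rfl⟩ ⟨e, rfl⟩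
  have hgpos : 2 ≤ g := by
    rcases hg2 with ⟨c0, hc0⟩
    have : g ≠ 0 := by
      intro h0
      have := Nat.eq_zero_of_gcd_eq_zero_left (hg ▸ h0)
      omega
    omega
  have hgle : g ≤ d2 + e := by omega
  -- Fine–Wilf on the middle palindrome
  set f : ℕ → Option Char := fun t => T[(b - 1) + t]? with hf
  have hp2 : ∀ t, t + 2 * d2 < ℓ → f t = f (t + 2 * d2) := by
    intro t ht
    have := P2 (b - 1 + t) (by omega) (by omega)
    simp only [hf]
    rw [this]; congr 1; omega
  have hp3 : ∀ t, t + 2 * e < ℓ → f t = f (t + 2 * e) := by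
    intro t ht
    have := P3 (b - 1 + t) (by omega) (by omega)
    simp only [hf]
    rw [this]; congr 1; omega
  have FWc := fineWilf (2 * d2 + 2 * e) (2 * d2) (2 * e) ℓ f le_rfl (by omega) (by omega)
    (by omega) hp2 hp3
  -- normalization into the middle window
  have hnorm : ∀ x, a - 1 ≤ x → x ≤ (a - 1) + (d2 + e) + ℓ - 1 →
      ∃ s, s < ℓ ∧ T[x]? = f s ∧ x % g = ((b - 1) + s) % g := by
    intro x hx1 hx2
    by_cases hlo : x < b - 1
    · refine ⟨x + 2 * d2 - (b - 1), by omega, ?_, ?_⟩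
      · have := P2 x (by omega) (by omega)
        rw [this]
        simp only [hf]
        congr 1; omega
      · have hx' : (b - 1) + (x + 2 * d2 - (b - 1)) = x + g * c2 := by omega
        rw [hx', Nat.add_mul_mod_self_left]
    · by_cases hhi : (b - 1) + ℓ - 1 < x
      · refine ⟨x - 2 * e - (b - 1), by omega, ?_, ?_⟩
        · have := P3 (x - 2 * e) (by omega) (by omega)
          have hi : x - 2 * e + 2 * e = x := by omega
          rw [hi] at this
          rw [← this]
          simp only [hf]
          congr 1; omega
        · have hx' : x = ((b - 1) + (x - 2 * e - (b - 1))) + g * c3 := by omega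
          conv_lhs => rw [hx', Nat.add_mul_mod_self_left]
      · refine ⟨x - (b - 1), by omega, ?_, ?_⟩
        · simp only [hf]; congr 1; omega
        · congr 1; omega
  -- period g on the whole union
  have hU : ∀ k, a - 1 ≤ k → k + g ≤ (a - 1) + (d2 + e) + ℓ - 1 →
      T[k]? = T[k + g]? := by
    intro k hk1 hk2
    obtain ⟨s, hs, hfs, hrs⟩ := hnorm k hk1 (by omega)
    obtain ⟨t, ht, hft, hrt⟩ := hnorm (k + g) (by omega) hk2
    rw [hfs, hft]
    refine FWc s t hs ht ?_
    have h1 : (k + g) % g = k % g := by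
      rw [show k + g = k + g * 1 by omega, Nat.add_mul_mod_self_left]
    have h2 : ((b - 1) + s) % g = ((b - 1) + t) % g := by
      rw [← hrs, ← hrt, h1]
    exact Nat.ModEq.add_left_cancel' (b - 1) h2
  -- second occurrence of the first palindrome
  have hla : (sub T a (a + ℓ - 1)).length = ℓ := sub_length' T a ℓ hℓ ha1 ha3
  have hocc1 : OccursAt (sub T a (a + ℓ - 1)) T a := by
    refine ⟨ha1, ?_, ?_⟩ <;> rw [hla]
    · exact ha3
  have hsubeq : sub T (a + g) (a + g + ℓ - 1) = sub T a (a + ℓ - 1) := by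
    apply List.ext_getElem?
    intro t
    rw [sub_getElem?' T (a + g) ℓ t hℓ, sub_getElem?' T a ℓ t hℓ]
    by_cases htℓ : t < ℓ
    · simp only [htℓ, if_true]
      have := hU (a - 1 + t) (by omega) (by omega)
      have hidx : a + g - 1 + t = a - 1 + t + g := by omega
      rw [hidx, ← this]
    · simp [htℓ]
  have hocc2 : OccursAt (sub T a (a + ℓ - 1)) T (a + g) := by
    refine ⟨by omega, ?_, ?_⟩ <;> rw [hla]
    · omega
    · exact hsubeq
  obtain ⟨-, j, hjocc, hjuniq⟩ := hua
  have e1 := hjuniq a hocc1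
  have e2 := hjuniq (a + g) hocc2
  omega

end AtMostTwoAux

/-- At most two unique palindromic substrings of fixed length ℓ cover p
with center at most p. -/
theorem at_most_two_left_centered (T : List Char) (p ℓ : ℕ) (hℓ : 1 ≤ ℓ) :
    ∀ i₁ i₂ i₃, Cond T p ℓ i₁ → Cond T p ℓ i₂ → Cond T p ℓ i₃ →
      i₁ = i₂ ∨ i₁ = i₃ ∨ i₂ = i₃ := by
  intro i1 i2 i3 h1 h2 h3
  by_contra hcon
  push_neg at hcon
  obtain ⟨h12, h13, h23⟩ := hcon
  rcases (Ne.lt_or_gt h12) with o12 | o21 <;>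
  rcases (Ne.lt_or_gt h13) with o13 | o31 <;>
  rcases (Ne.lt_or_gt h23) with o23 | o32 <;>
  first
    | exact key_lemma T p ℓ hℓ i1 i2 i3 ‹_› ‹_› h1 h2 h3
    | exact key_lemma T p ℓ hℓ i1 i3 i2 ‹_› ‹_› h1 h3 h2
    | exact key_lemma T p ℓ hℓ i2 i1 i3 ‹_› ‹_› h2 h1 h3
    | exact key_lemma T p ℓ hℓ i2 i3 i1 ‹_› ‹_› h2 h3 h1
    | exact key_lemma T p ℓ hℓ i3 i1 i2 ‹_› ‹_› h3 h1 h2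
    | exact key_lemma T p ℓ hℓ i3 i2 i1 ‹_› ‹_› h3 h2 h1
end

section
/- Every SUPS of T for an interval [p,q] contains exactly one MUPS of T within its occurrence interval: if T[i..j] is a SUPS for [p,q], then there is exactly one MUPS T[i'..j'] of T with i ≤ i' and j' ≤ j. -/
-- basic facts ---------------------------------------------------------------

lemma length_sub (T : List Char) {i j : ℕ} (h1 : 1 ≤ i) (h2 : i ≤ j)
    (h3 : j ≤ T.length) : (sub T i j).length = j + 1 - i := by
  simp [sub]; omega

lemma sub_ne_nil (T : List Char) {i j : ℕ} (h1 : 1 ≤ i) (h2 : i ≤ j)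
    (h3 : j ≤ T.length) : sub T i j ≠ [] := by
  intro h
  have := length_sub T h1 h2 h3
  rw [h] at this
  simp at this; omega

lemma decomp3 (w : List Char) (n m : ℕ) :
    w = w.take n ++ ((w.drop n).take m ++ (w.drop n).drop m) := by
  rw [List.take_append_drop, List.take_append_drop]

/-- Occurrence via decomposition, for nonempty u. -/
lemma occursAt_iff {u T : List Char} (hu : u ≠ []) (i : ℕ) :
    OccursAt u T i ↔ ∃ s t : List Char, T = s ++ u ++ t ∧ s.length + 1 = i := by
  have hul : 1 ≤ u.length := List.length_pos_iff.2 hu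
  constructor
  · rintro ⟨h1, h2, h3⟩
    refine ⟨T.take (i-1), (T.drop (i-1)).drop u.length, ?_, ?_⟩
    · have hsub : (T.drop (i-1)).take u.length = u := by
        have : i + u.length - 1 + 1 - i = u.length := by omega
        rw [sub, this] at h3
        exact h3
      conv_lhs => rw [decomp3 T (i-1) u.length]
      rw [hsub, ← List.append_assoc]
    · have : i - 1 ≤ T.length := by omega
      simp [this]
      omega
  · rintro ⟨s, t, rfl, hs⟩
    have hi1 : i - 1 = s.length := by omega
    refine ⟨by omega, ?_, ?_⟩
    · simp; omega
    · have hlen : i + u.length - 1 + 1 - i = u.length := by omega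
      rw [sub, hlen, hi1]
      rw [List.append_assoc] at *
      rw [List.drop_left, List.take_left]

/-- The nesting identity for substrings. -/
lemma sub_nest (T : List Char) {a b c d : ℕ} (ha : 1 ≤ a) (hac : a ≤ c)
    (hcd : c ≤ d) (hdb : d ≤ b) :
    sub T c d = ((sub T a b).drop (c-a)).take (d+1-c) := by
  have e1 : a - 1 + (c - a) = c - 1 := by omega
  have e2 : b + 1 - a - (c - a) = b + 1 - c := by omega
  have e3 : min (d+1-c) (b+1-c) = d + 1 - c := by omega
  rw [sub, sub, List.drop_take, List.drop_drop, List.take_take, e2, e1, e3]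

/-- sub T i j occurs at i. -/
lemma occursAt_sub (T : List Char) {i j : ℕ} (h1 : 1 ≤ i) (h2 : i ≤ j)
    (h3 : j ≤ T.length) : OccursAt (sub T i j) T i := by
  rw [occursAt_iff (sub_ne_nil T h1 h2 h3)]
  refine ⟨T.take (i-1), (T.drop (i-1)).drop (j+1-i), ?_, ?_⟩
  · conv_lhs => rw [decomp3 T (i-1) (j+1-i)]
    simp [sub, List.append_assoc]
  · have : i - 1 ≤ T.length := by omega
    simp [this]; omega

/-- If w = c ++ u ++ d and w occurs at p, then u occurs at p + |c|. -/
lemma occursAt_of_inside {u w T : List Char} {p : ℕ} (hu : u ≠ []) (hw : w ≠ [])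
    (hp : OccursAt w T p) (c d : List Char) (hcd : w = c ++ u ++ d) :
    OccursAt u T (p + c.length) := by
  rw [occursAt_iff hw] at hp
  obtain ⟨s, t, hT, hs⟩ := hp
  rw [occursAt_iff hu]
  refine ⟨s ++ c, d ++ t, ?_, by simp; omega⟩
  rw [hT, hcd]
  simp

-- inner palindrome ----------------------------------------------------------

lemma isPal_drop_dropLast {w : List Char} (h : IsPal w) :
    IsPal ((w.drop 1).dropLast) := by
  have hp : w.Palindrome := List.Palindrome.of_reverse_eq h
  cases hp with
  | nil => simp [IsPal]
  | singleton x => simp [IsPal]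
  | cons_concat x hl =>
    rename_i l
    have : ((x :: (l ++ [x])).drop 1).dropLast = l := by simp
    rw [this]
    exact hl.reverse_eq

lemma sub_inner (T : List Char) {i j : ℕ} (h1 : 1 ≤ i) (h2 : i ≤ j)
    (h3 : j ≤ T.length) :
    sub T (i+1) (j-1) = ((sub T i j).drop 1).dropLast := by
  have hlen : (sub T i j).length = j + 1 - i := length_sub T h1 h2 h3
  rw [List.dropLast_eq_take]
  rw [sub, sub, List.drop_take, List.drop_drop, List.take_take]
  simp [hlen]
  congr 1
  · omega
  · congr 1
    omega

-- existence of MUPS ---------------------------------------------------------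

lemma exists_mups (T : List Char) : ∀ n i j, j + 1 - i ≤ n → IsPalSub T i j →
    UniqueIn (sub T i j) T → ∃ a b, IsMUPS T a b ∧ i ≤ a ∧ b ≤ j := by
  intro n
  induction n with
  | zero => intro i j hn ⟨h1, h2, h3, _⟩ _; omega
  | succ n ih =>
    intro i j hn hps hu
    obtain ⟨h1, h2, h3, hpal⟩ := hps
    by_cases hinner : UniqueIn (sub T (i+1) (j-1)) T
    · -- inner is unique; recurse
      have hne : sub T (i+1) (j-1) ≠ [] := hinner.1
      have hlen : (sub T (i+1) (j-1)).length ≤ j - 1 + 1 - (i+1) := by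
        rw [sub]; exact List.length_take_le _ _
      have hpos : 0 < (sub T (i+1) (j-1)).length := List.length_pos_iff.2 hne
      have hij : i + 1 ≤ j - 1 := by omega
      have hpal' : IsPal (sub T (i+1) (j-1)) := by
        rw [sub_inner T h1 h2 h3]
        exact isPal_drop_dropLast hpal
      obtain ⟨a, b, hm, hab1, hab2⟩ := ih (i+1) (j-1) (by omega)
        ⟨by omega, hij, by omega, hpal'⟩ hinner
      exact ⟨a, b, hm, by omega, by omega⟩
    · exact ⟨i, j, ⟨⟨h1, h2, h3, hpal⟩, hu, hinner⟩, le_refl _, le_refl _⟩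

-- containment implies uniqueness ---------------------------------------------

lemma uniqueIn_of_contains (T : List Char) {a b c d : ℕ} (ha : 1 ≤ a)
    (hab : a ≤ b) (hb : b ≤ T.length) (hac : a ≤ c) (hcd : c ≤ d) (hdb : d ≤ b)
    (hu : UniqueIn (sub T c d) T) : UniqueIn (sub T a b) T := by
  have hc1 : 1 ≤ c := by omega
  have hd : d ≤ T.length := by omega
  have hwne := sub_ne_nil T ha hab hb
  have hune := sub_ne_nil T hc1 hcd hd
  have hwlen := length_sub T ha hab hb
  -- decomposition of w containing u
  have hnest := sub_nest T ha hac hcd hdb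
  set w := sub T a b with hw
  set u := sub T c d with husub
  have hdecomp : w = w.take (c-a) ++ (u ++ ((w.drop (c-a)).drop (d+1-c))) := by
    conv_lhs => rw [decomp3 w (c-a) (d+1-c)]
    rw [← hnest]
  have hctake : (w.take (c-a)).length = c - a := by
    rw [List.length_take]; omega
  -- the unique position of u is c
  obtain ⟨_, pu, hpu, hpuniq⟩ := hu
  have hoc : OccursAt u T c := occursAt_sub T hc1 hcd hd
  have hpc : c = pu := hpuniq c hoc
  refine ⟨hwne, a, occursAt_sub T ha hab hb, ?_⟩
  intro p hp
  have : OccursAt u T (p + (w.take (c-a)).length) := by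
    apply occursAt_of_inside hune hwne hp (w.take (c-a)) ((w.drop (c-a)).drop (d+1-c))
    rw [← List.append_assoc] at hdecomp
    exact hdecomp
  have h1 := hpuniq _ this
  rw [hctake] at h1
  omega

-- mirror / same center --------------------------------------------------------

lemma center_eq (T : List Char) {i j a b : ℕ} (h1 : 1 ≤ i) (h2 : i ≤ j)
    (h3 : j ≤ T.length) (hpal : IsPal (sub T i j))
    (hia : i ≤ a) (hab : a ≤ b) (hbj : b ≤ j)
    (hpalM : IsPal (sub T a b)) (huM : UniqueIn (sub T a b) T) :
    a + b = i + j := by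
  have ha1 : 1 ≤ a := by omega
  have hb : b ≤ T.length := by omega
  set P := sub T i j with hP
  set M := sub T a b with hM
  have hPlen : P.length = j + 1 - i := length_sub T h1 h2 h3
  have hMlen : M.length = b + 1 - a := length_sub T ha1 hab hb
  have hPne := sub_ne_nil T h1 h2 h3
  have hMne := sub_ne_nil T ha1 hab hb
  have hnest := sub_nest T h1 hia hab hbj
  set c := P.take (a - i) with hc
  set R := (P.drop (a - i)).drop (b + 1 - a) with hR
  have hdecomp : P = c ++ M ++ R := by
    conv_lhs => rw [decomp3 P (a-i) (b+1-a)]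
    rw [← hnest, List.append_assoc]
  have hclen : c.length = a - i := by rw [hc, List.length_take]; omega
  have hRlen : R.length = j - b := by
    rw [hR]
    simp [hPlen]
    omega
  -- mirrored decomposition
  have hpal' : P.reverse = P := hpal
  have hpalM' : M.reverse = M := hpalM
  have hmirror : P = R.reverse ++ M ++ c.reverse := by
    conv_lhs => rw [← hpal']
    rw [hdecomp]
    simp [hpalM']
  -- P occurs at i
  have hPocc : OccursAt P T i := occursAt_sub T h1 h2 h3
  have ho1 : OccursAt M T (i + R.reverse.length) :=
    occursAt_of_inside hMne hPne hPocc R.reverse c.reverse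
      (by rw [← hmirror])
  have ho2 : OccursAt M T a := occursAt_sub T ha1 hab hb
  obtain ⟨_, pu, hpu, hpuniq⟩ := huM
  have e1 := hpuniq _ ho1
  have e2 := hpuniq _ ho2
  rw [List.length_reverse, hRlen] at e1
  omega

-- uniqueness of MUPS ----------------------------------------------------------

lemma mups_eq_of_le (T : List Char) {i j a1 b1 a2 b2 : ℕ}
    (hm1 : IsMUPS T a1 b1) (hm2 : IsMUPS T a2 b2)
    (hc1 : a1 + b1 = i + j) (hc2 : a2 + b2 = i + j) (hle : a1 ≤ a2) :
    a1 = a2 ∧ b1 = b2 := by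
  obtain ⟨⟨ha1, hab1, hb1, _⟩, _, hnotinner⟩ := hm1
  obtain ⟨⟨ha2, hab2, hb2, _⟩, hu2, _⟩ := hm2
  rcases Nat.eq_or_lt_of_le hle with heq | hlt
  · constructor
    · exact heq
    · omega
  · exfalso
    apply hnotinner
    exact uniqueIn_of_contains T (by omega) (by omega) (by omega)
      (by omega) hab2 (by omega) hu2

/-- Every SUPS contains exactly one MUPS in its occurrence interval. -/
theorem sups_contains_exactly_one_mups (T : List Char) (p q i j : ℕ)
    (h : IsSUPS T p q i j) :
    ∃! m : ℕ × ℕ, IsMUPS T m.1 m.2 ∧ i ≤ m.1 ∧ m.2 ≤ j := by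
  obtain ⟨⟨h1, h2, h3, hpal⟩, hu, -, -, -⟩ := h
  obtain ⟨a, b, hm, hia, hbj⟩ :=
    exists_mups T (j+1-i) i j (le_refl _) ⟨h1, h2, h3, hpal⟩ hu
  refine ⟨(a, b), ⟨hm, hia, hbj⟩, ?_⟩
  rintro ⟨a', b'⟩ ⟨hm', hia', hbj'⟩
  have hc : a + b = i + j :=
    center_eq T h1 h2 h3 hpal hia hm.1.2.1 hbj hm.1.2.2.2 hm.2.1
  have hc' : a' + b' = i + j :=
    center_eq T h1 h2 h3 hpal hia' hm'.1.2.1 hbj' hm'.1.2.2.2 hm'.2.1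
  rcases le_total a' a with hle | hle
  · obtain ⟨e1, e2⟩ := mups_eq_of_le T hm' hm hc' hc hle
    simp only [Prod.mk.injEq]
    exact ⟨e1, e2⟩
  · obtain ⟨e1, e2⟩ := mups_eq_of_le T hm hm' hc hc' hle
    simp only [Prod.mk.injEq]
    exact ⟨e1.symm, e2.symm⟩
end

section
/- Let x, y, z be three palindromic substrings of T of equal length ℓ with centers c_x < c_y < c_z, and set d₁ = c_y - c_x, d₂ = c_z - c_y. If 2d₁ + 2d₂ ≤ ℓ, then the string y has both periods 2d₁ and 2d₂, and hence has period gcd(2d₁, 2d₂). -/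
lemma sub_len {T : List Char} {a ℓ : ℕ} (h : a + ℓ ≤ T.length) :
    ((T.drop a).take ℓ).length = ℓ := by
  simp [List.length_take, List.length_drop]; omega

lemma sub_get {T : List Char} {a ℓ m : ℕ} (hm : m < ℓ) :
    ((T.drop a).take ℓ)[m]? = T[a + m]? := by
  simp [List.getElem?_take, List.getElem?_drop, hm]

/-- pointwise palindrome property at T-level -/
lemma pal_get {T : List Char} {a ℓ : ℕ} (h : a + ℓ ≤ T.length)
    (hpal : IsPal ((T.drop a).take ℓ)) (m : ℕ) (hm : m < ℓ) :
    T[a + m]? = T[a + (ℓ - 1 - m)]? := by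
  have hlen := sub_len h
  have h1 : ((T.drop a).take ℓ).reverse[m]? = ((T.drop a).take ℓ)[ℓ - 1 - m]? := by
    rw [List.getElem?_reverse (by omega), hlen]
  rw [hpal] at h1
  rw [sub_get hm, sub_get (by omega : ℓ - 1 - m < ℓ)] at h1
  exact h1

/-- two palindromes at 0-indexed starts a < b of same length ℓ; the later one has period 2(b-a). -/
lemma later_period {T : List Char} {a b ℓ : ℕ} (hab : a ≤ b) (hbl : b + ℓ ≤ T.length)
    (hal : a + ℓ ≤ T.length)
    (hA : IsPal ((T.drop a).take ℓ)) (hB : IsPal ((T.drop b).take ℓ))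
    (h2d : 2 * (b - a) ≤ ℓ) :
    ∀ m, m + 2 * (b - a) < ℓ → T[b + m]? = T[b + m + 2 * (b - a)]? := by
  intro m hm
  set d := b - a with hd
  have e1 : T[b + (m + 2 * d)]? = T[b + (ℓ - 1 - (m + 2 * d))]? :=
    pal_get hbl hB _ (by omega)
  have e2 : b + (ℓ - 1 - (m + 2 * d)) = a + (ℓ - 1 - (m + d)) := by omega
  have e3 : T[a + (ℓ - 1 - (m + d))]? = T[a + (ℓ - 1 - (ℓ - 1 - (m + d)))]? :=
    pal_get hal hA _ (by omega)
  have e4 : a + (ℓ - 1 - (ℓ - 1 - (m + d))) = b + m := by omega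
  have e5 : b + m + 2 * d = b + (m + 2 * d) := by omega
  rw [e5, e1, e2, e3, e4]

/-- two palindromes at 0-indexed starts a < b of same length ℓ; the earlier one has period 2(b-a). -/
lemma earlier_period {T : List Char} {a b ℓ : ℕ} (hab : a ≤ b) (hbl : b + ℓ ≤ T.length)
    (hal : a + ℓ ≤ T.length)
    (hA : IsPal ((T.drop a).take ℓ)) (hB : IsPal ((T.drop b).take ℓ))
    (h2d : 2 * (b - a) ≤ ℓ) :
    ∀ m, m + 2 * (b - a) < ℓ → T[a + m]? = T[a + m + 2 * (b - a)]? := by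
  intro m hm
  set d := b - a with hd
  have e0 : a + m + 2 * d = b + (m + d) := by omega
  have e1 : T[b + (m + d)]? = T[b + (ℓ - 1 - (m + d))]? :=
    pal_get hbl hB _ (by omega)
  have e2 : b + (ℓ - 1 - (m + d)) = a + (ℓ - 1 - m) := by omega
  have e3 : T[a + m]? = T[a + (ℓ - 1 - m)]? := pal_get hal hA _ (by omega)
  rw [e0, e1, e2, e3]

lemma period_gcd_aux (n : ℕ) : ∀ (w : List Char) (p q : ℕ), p + q ≤ n →
    HasPeriod w p → HasPeriod w q → p + q ≤ w.length → HasPeriod w (Nat.gcd p q) := by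
  induction n using Nat.strong_induction_on with
  | _ n ih =>
  intro w p q hn hp hq hpq
  obtain ⟨hp0, hpl, hpk⟩ := hp
  obtain ⟨hq0, hql, hqk⟩ := hq
  rcases lt_trichotomy p q with hlt | heq | hgt
  · have hsub : ∀ k, k + (q - p) < w.length → w[k]? = w[k + (q - p)]? := by
      intro k hk
      by_cases hc : k + q < w.length
      · rw [hqk k hc]
        have h2 := hpk (k + (q - p)) (by omega)
        rw [h2]; congr 1; omega
      · obtain ⟨k', rfl⟩ : ∃ k', k = k' + p := ⟨k - p, by omega⟩
        have e1 := hpk k' (by omega)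
        have e2 := hqk k' (by omega)
        rw [← e1, e2]; congr 1; omega
    have hrec := ih q (by omega) w p (q - p) (by omega) ⟨hp0, hpl, hpk⟩
      ⟨by omega, by omega, hsub⟩ (by omega)
    rwa [Nat.gcd_sub_self_right (by omega)] at hrec
  · subst heq
    rw [Nat.gcd_self]
    exact ⟨hp0, hpl, hpk⟩
  · have hsub : ∀ k, k + (p - q) < w.length → w[k]? = w[k + (p - q)]? := by
      intro k hk
      by_cases hc : k + p < w.length
      · rw [hpk k hc]
        have h2 := hqk (k + (p - q)) (by omega)
        rw [h2]; congr 1; omega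
      · obtain ⟨k', rfl⟩ : ∃ k', k = k' + q := ⟨k - q, by omega⟩
        have e1 := hqk k' (by omega)
        have e2 := hpk k' (by omega)
        rw [← e1, e2]; congr 1; omega
    have hrec := ih p (by omega) w (p - q) q (by omega)
      ⟨by omega, by omega, hsub⟩ ⟨hq0, hql, hqk⟩ (by omega)
    rwa [Nat.gcd_sub_self_left (by omega)] at hrec

lemma period_gcd {w : List Char} {p q : ℕ} (hp : HasPeriod w p) (hq : HasPeriod w q)
    (hpq : p + q ≤ w.length) : HasPeriod w (Nat.gcd p q) :=
  period_gcd_aux (p + q) w p q le_rfl hp hq hpq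

/-- Three same-length overlapping palindromes give the middle one periods
2d₁, 2d₂ and hence gcd(2d₁, 2d₂). -/
theorem middle_palindrome_periods (T : List Char) (i j k ℓ : ℕ)
    (hi : 1 ≤ i) (h1 : i < j) (h2 : j < k) (hℓ : 1 ≤ ℓ)
    (hb : k + ℓ - 1 ≤ T.length)
    (hx : IsPal (sub T i (i + ℓ - 1)))
    (hy : IsPal (sub T j (j + ℓ - 1)))
    (hz : IsPal (sub T k (k + ℓ - 1)))
    (hsum : 2 * (j - i) + 2 * (k - j) ≤ ℓ) :
    HasPeriod (sub T j (j + ℓ - 1)) (2 * (j - i)) ∧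
    HasPeriod (sub T j (j + ℓ - 1)) (2 * (k - j)) ∧
    HasPeriod (sub T j (j + ℓ - 1)) (Nat.gcd (2 * (j - i)) (2 * (k - j))) := by
  have hjl : (j-1) + ℓ ≤ T.length := by omega
  have hil : (i-1) + ℓ ≤ T.length := by omega
  have hkl : (k-1) + ℓ ≤ T.length := by omega
  have hsx : sub T i (i+ℓ-1) = (T.drop (i-1)).take ℓ := by unfold sub; congr 1; omega
  have hsy : sub T j (j+ℓ-1) = (T.drop (j-1)).take ℓ := by unfold sub; congr 1; omega
  have hsz : sub T k (k+ℓ-1) = (T.drop (k-1)).take ℓ := by unfold sub; congr 1; omega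
  rw [hsx] at hx; rw [hsy] at hy; rw [hsz] at hz
  rw [hsy]
  have key1 := later_period (T := T) (a := i-1) (b := j-1) (ℓ := ℓ)
    (by omega) hjl hil hx hy (by omega)
  rw [show (j-1)-(i-1) = j - i from by omega] at key1
  have key2 := earlier_period (T := T) (a := j-1) (b := k-1) (ℓ := ℓ)
    (by omega) hkl hjl hy hz (by omega)
  rw [show (k-1)-(j-1) = k - j from by omega] at key2
  have P1 : HasPeriod ((T.drop (j-1)).take ℓ) (2*(j-i)) := by
    refine ⟨by omega, ?_, ?_⟩
    · rw [sub_len hjl]; omega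
    · intro m hm
      rw [sub_len hjl] at hm
      rw [sub_get (by omega), sub_get (by omega)]
      rw [show (j-1)+(m+2*(j-i)) = (j-1)+m+2*(j-i) from by omega]
      exact key1 m (by omega)
  have P2 : HasPeriod ((T.drop (j-1)).take ℓ) (2*(k-j)) := by
    refine ⟨by omega, ?_, ?_⟩
    · rw [sub_len hjl]; omega
    · intro m hm
      rw [sub_len hjl] at hm
      rw [sub_get (by omega), sub_get (by omega)]
      rw [show (j-1)+(m+2*(k-j)) = (j-1)+m+2*(k-j) from by omega]
      exact key2 m (by omega)
  exact ⟨P1, P2, period_gcd P1 P2 (by rw [sub_len hjl]; omega)⟩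
end

section
/- Let T be a string in which the suffix T[b..e] of the window is a palindrome (where T[b..e] is the whole window). Then for every offset 0 < j ≤ (e-b)/2 (including half-integer centers), the maximal palindrome of T[b..e] centered at (b+e)/2 + j has the same arm length as the maximal palindrome centered at (b+e)/2 - j, as long as neither reaches the window boundary. -/
/-- T[i..j] is a maximal palindrome within the window T[b..e]. -/
def IsMaxPalIn (T : List Char) (b e i j : ℕ) : Prop :=
  b ≤ i ∧ i ≤ j ∧ j ≤ e ∧ IsPal (sub T i j) ∧
  (i = b ∨ j = e ∨ T[i - 2]? ≠ T[j]?)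

lemma sub_get' (T : List Char) (a c k : ℕ) (ha : 1 ≤ a) (hk : a ≤ k) (hkc : k ≤ c) :
    (sub T a c)[k - a]? = T[k - 1]? := by
  unfold sub
  rw [List.getElem?_take_of_lt (by omega), List.getElem?_drop]
  congr 1; omega

lemma pal_refl (T : List Char) (a c : ℕ) (ha : 1 ≤ a) (hac : a ≤ c) (hc : c ≤ T.length)
    (hp : IsPal (sub T a c)) {k : ℕ} (hk : a ≤ k) (hkc : k ≤ c) :
    T[k - 1]? = T[a + c - k - 1]? := by
  have hlen : (sub T a c).length = c + 1 - a := by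
    unfold sub; rw [List.length_take, List.length_drop]; omega
  have h1 := sub_get' T a c k ha hk hkc
  have h2 := sub_get' T a c (a + c - k) ha (by omega) (by omega)
  have h3 : (sub T a c).reverse[k - a]?
      = (sub T a c)[(sub T a c).length - 1 - (k - a)]? := by
    exact List.getElem?_reverse (by omega)
  rw [hp] at h3
  have h4 : (sub T a c).length - 1 - (k - a) = a + c - k - a := by omega
  rw [h4] at h3
  rw [← h1, ← h2]; exact h3

lemma manacher_key (T : List Char) (b e i₁ j₁ i₂ j₂ : ℕ)
    (hb : 1 ≤ b) (he : e ≤ T.length)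
    (hwin : IsPal (sub T b e))
    (hp1 : IsPal (sub T i₁ j₁))
    (hb1 : b ≤ i₁) (hij1 : i₁ ≤ j₁) (hj1 : j₁ ≤ e)
    (hij2 : i₂ ≤ j₂)
    (hm2 : T[i₂ - 2]? ≠ T[j₂]?)
    (hsym : i₁ + j₁ + i₂ + j₂ = 2 * (b + e))
    (hbi2 : b < i₂) (hj2e : j₂ < e)
    (hd : j₂ + i₁ + 2 ≤ j₁ + i₂) : False := by
  have hbe : b ≤ e := by omega
  set p := i₂ - 1 with hpdef
  have s1 : T[p - 1]? = T[b + e - p - 1]? :=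
    pal_refl T b e hb hbe he hwin (by omega) (by omega)
  have s2 : T[b + e - p - 1]? = T[i₁ + j₁ - (b + e - p) - 1]? :=
    pal_refl T i₁ j₁ (by omega) hij1 (by omega) hp1 (by omega) (by omega)
  have s3 : T[i₁ + j₁ - (b + e - p) - 1]?
      = T[b + e - (i₁ + j₁ - (b + e - p)) - 1]? :=
    pal_refl T b e hb hbe he hwin (by omega) (by omega)
  have e1 : p - 1 = i₂ - 2 := by omega
  have e2 : b + e - (i₁ + j₁ - (b + e - p)) - 1 = j₂ := by omega
  apply hm2
  rw [← e1, ← e2, s1, s2, s3]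

/-- Manacher symmetry: if the whole window T[b..e] is a palindrome, then
maximal palindromes at centers symmetric about the window center, neither
of which reaches the window boundary, have equal arm lengths. -/
theorem manacher_symmetry (T : List Char) (b e i₁ j₁ i₂ j₂ : ℕ)
    (hb : 1 ≤ b) (he : e ≤ T.length) (hbe : b ≤ e)
    (hwin : IsPal (sub T b e))
    (h1 : IsMaxPalIn T b e i₁ j₁) (h2 : IsMaxPalIn T b e i₂ j₂)
    (hsym : i₁ + j₁ + i₂ + j₂ = 2 * (b + e))
    (hin1 : b < i₁ ∧ j₁ < e) (hin2 : b < i₂ ∧ j₂ < e) :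
    j₁ + 1 - i₁ = j₂ + 1 - i₂ := by
  obtain ⟨hb1, hij1, hj1, hp1, hm1⟩ := h1
  obtain ⟨hb2, hij2, hj2, hp2, hm2⟩ := h2
  obtain ⟨hin1a, hin1b⟩ := hin1
  obtain ⟨hin2a, hin2b⟩ := hin2
  have hm1' : T[i₁ - 2]? ≠ T[j₁]? := by
    rcases hm1 with h | h | h
    · omega
    · omega
    · exact h
  have hm2' : T[i₂ - 2]? ≠ T[j₂]? := by
    rcases hm2 with h | h | h
    · omega
    · omega
    · exact h
  rcases lt_trichotomy (j₁ + i₂) (j₂ + i₁) with h | h | h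
  · exact absurd (manacher_key T b e i₂ j₂ i₁ j₁ hb he hwin hp2 hb2 hij2 hj2 hij1
      hm1' (by omega) hin1a hin1b (by omega)) not_false
  · omega
  · exact absurd (manacher_key T b e i₁ j₁ i₂ j₂ hb he hwin hp1 hb1 hij1 hj1 hij2
      hm2' hsym hin2a hin2b (by omega)) not_false
end
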